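/- arXiv:2001.04898 — 2 statements merged into one kernel-verified Lean document; each statement's English description precedes it below -/
import Mathlib

section
/- Let f1, f2: (ZMod 2)^m → ZMod q be generalized Boolean functions and f'(x) = Σ_k c_k x_k + c' an affine function (c_k, c' ∈ ZMod q, with x_k interpreted in {0,1}). Then for every shift vector τ ∈ {-1,0,1}^m, the aperiodic cross-correlation satisfies C_{f1+f', f2+f'}(τ) = ω^{f'(τ) - c'} · C_{f1,f2}(τ), where f'(τ) is evaluated with the integer entries of τ. -/
open scoped BigOperators

noncomputable def omg (q : ℕ) : ℂ := Complex.exp (2 * Real.pi * Complex.I / q)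

noncomputable def ec (q : ℕ) (a : ZMod q) : ℂ := omg q ^ a.val

/-- Aperiodic cross-correlation of arrays `(ZMod 2)^m → ZMod q` at integer shift `τ`;
out-of-range terms are omitted (captured by the indicator on pairs `x, x'` of valid points). -/
noncomputable def acorr (q m : ℕ) (f1 f2 : (Fin m → ZMod 2) → ZMod q) (τ : Fin m → ℤ) : ℂ :=
  ∑ x : Fin m → ZMod 2, ∑ x' : Fin m → ZMod 2,
    if ∀ k, ((x k).val : ℤ) = ((x' k).val : ℤ) + τ k then ec q (f1 x - f2 x') else 0

/-- Adding an affine function `f'(x) = ∑ c_k x_k + c'` to both arrays multiplies the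
cross-correlation at shift `τ` by `ω^{f'(τ) - c'}`. -/
theorem stmt3 (q m : ℕ) (hq : 0 < q) (f1 f2 : (Fin m → ZMod 2) → ZMod q)
    (c : Fin m → ZMod q) (c' : ZMod q) (τ : Fin m → ℤ)
    (hτ : ∀ k, τ k = -1 ∨ τ k = 0 ∨ τ k = 1) :
    acorr q m (fun x => f1 x + ((∑ k, c k * ((x k).val : ZMod q)) + c'))
              (fun x => f2 x + ((∑ k, c k * ((x k).val : ZMod q)) + c')) τ =
      ec q ((∑ k, c k * ((τ k : ℤ) : ZMod q)) + c' - c') * acorr q m f1 f2 τ := by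
  haveI : NeZero q := ⟨hq.ne'⟩
  have homg : omg q ^ q = 1 := by
    rw [omg, ← Complex.exp_nat_mul]
    have hq' : (q : ℂ) ≠ 0 := by exact_mod_cast hq.ne'
    rw [mul_div_cancel₀ _ hq', Complex.exp_two_pi_mul_I]
  have key : ∀ n : ℕ, omg q ^ n = omg q ^ (n % q) := by
    intro n
    conv_lhs => rw [← Nat.mod_add_div n q]
    rw [pow_add, pow_mul, homg, one_pow, mul_one]
  have hec : ∀ a b : ZMod q, ec q (a + b) = ec q a * ec q b := by
    intro a b
    show omg q ^ (a + b).val = omg q ^ a.val * omg q ^ b.val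
    rw [ZMod.val_add, ← key, pow_add]
  rw [add_sub_cancel_right]
  unfold acorr
  rw [Finset.mul_sum]
  refine Finset.sum_congr rfl fun x _ => ?_
  rw [Finset.mul_sum]
  refine Finset.sum_congr rfl fun x' _ => ?_
  by_cases h : ∀ k, ((x k).val : ℤ) = ((x' k).val : ℤ) + τ k
  · rw [if_pos h, if_pos h]
    have hd : (∑ k, c k * ((x k).val : ZMod q)) - (∑ k, c k * ((x' k).val : ZMod q))
        = ∑ k, c k * ((τ k : ℤ) : ZMod q) := by
      rw [← Finset.sum_sub_distrib]
      refine Finset.sum_congr rfl fun k _ => ?_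
      rw [← mul_sub]
      congr 1
      have := congrArg (fun z : ℤ => (z : ZMod q)) (h k)
      push_cast at this
      rw [this]; ring
    have harg : (f1 x + ((∑ k, c k * ((x k).val : ZMod q)) + c'))
        - (f2 x' + ((∑ k, c k * ((x' k).val : ZMod q)) + c'))
        = (∑ k, c k * ((τ k : ℤ) : ZMod q)) + (f1 x - f2 x') := by
      rw [← hd]; ring
    rw [harg, hec]
  · rw [if_neg h, if_neg h, mul_zero]
end

section
/- If M(z) is an N×N multivariate para-unitary matrix (M(z)·M†(z^{-1}) = c·I_N for some real constant c) whose (i,j) entry is the generating function of an array f_{i,j}: (ZMod p)^m → ZMod q, then for each fixed row i, the arrays {f_{i,0}, ..., f_{i,N-1}} form a complementary array set of size N. -/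
open scoped BigOperators

/-- Aperiodic cross-correlation of arrays `(ZMod p)^m → ZMod q` at integer shift `τ`. -/
noncomputable def pcorr (q p m : ℕ) [NeZero p]
    (f1 f2 : (Fin m → ZMod p) → ZMod q) (τ : Fin m → ℤ) : ℂ :=
  ∑ y : Fin m → ZMod p, ∑ y' : Fin m → ZMod p,
    if ∀ k, ((y k).val : ℤ) = ((y' k).val : ℤ) + τ k then ec q (f1 y - f2 y') else 0

/-- The generating matrix of the function matrix `f`, evaluated at `z`. -/
noncomputable def genMat (q p m N : ℕ) [NeZero p]
    (f : Fin N → Fin N → (Fin m → ZMod p) → ZMod q) (z : Fin m → ℂ) :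
    Matrix (Fin N) (Fin N) ℂ :=
  fun i j => ∑ y : Fin m → ZMod p, ec q (f i j y) * ∏ k, z k ^ (y k).val

/-- The conjugate transpose of the generating matrix (coefficients conjugated), at `z`. -/
noncomputable def genMatDag (q p m N : ℕ) [NeZero p]
    (f : Fin N → Fin N → (Fin m → ZMod p) → ZMod q) (z : Fin m → ℂ) :
    Matrix (Fin N) (Fin N) ℂ :=
  fun i j => ∑ y : Fin m → ZMod p, ec q (-(f j i y)) * ∏ k, z k ^ (y k).val

lemma charSum (L : ℕ) (hL : 0 < L) (d : ℤ) :
    ∑ a : Fin L, Complex.exp (2 * Real.pi * Complex.I / L) ^ ((a : ℤ) * d)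
      = if (L : ℤ) ∣ d then (L : ℂ) else 0 := by
  set ζ : ℂ := Complex.exp (2 * Real.pi * Complex.I / L) with hζ
  have hprim : IsPrimitiveRoot ζ L := Complex.isPrimitiveRoot_exp L hL.ne'
  have hx : ∀ a : Fin L, ζ ^ ((a : ℤ) * d) = (ζ ^ d) ^ (a : ℕ) := by
    intro a
    rw [mul_comm, zpow_mul, zpow_natCast]
  simp only [hx]
  rw [Fin.sum_univ_eq_sum_range (fun i => (ζ ^ d) ^ i) L]
  by_cases hdvd : (L : ℤ) ∣ d
  · have h1 : ζ ^ d = 1 := (hprim.zpow_eq_one_iff_dvd d).mpr hdvd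
    simp [h1, hdvd]
  · have h1 : ζ ^ d ≠ 1 := fun h => hdvd ((hprim.zpow_eq_one_iff_dvd d).mp h)
    rw [geom_sum_eq h1]
    have hL1 : (ζ ^ d) ^ L = 1 := by
      rw [← zpow_natCast, ← zpow_mul, mul_comm, zpow_mul, zpow_natCast,
        hprim.pow_eq_one, one_zpow]
    simp [hL1, hdvd]

lemma omg_pow_q (q : ℕ) (hq : 0 < q) : omg q ^ q = 1 := by
  rw [omg, ← Complex.exp_nat_mul]
  have hq' : (q : ℂ) ≠ 0 := by exact_mod_cast hq.ne'
  rw [show (q : ℂ) * (2 * Real.pi * Complex.I / q) = 2 * Real.pi * Complex.I by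
    field_simp]
  exact Complex.exp_two_pi_mul_I

lemma omg_pow_mod (q : ℕ) (hq : 0 < q) (x : ℕ) : omg q ^ x = omg q ^ (x % q) := by
  conv_lhs => rw [← Nat.mod_add_div x q]
  rw [pow_add, pow_mul, omg_pow_q q hq, one_pow, mul_one]

lemma ec_add (q : ℕ) (hq : 0 < q) (a b : ZMod q) : ec q (a + b) = ec q a * ec q b := by
  haveI : NeZero q := ⟨hq.ne'⟩
  rw [ec, ec, ec, ← pow_add, ZMod.val_add, ← omg_pow_mod q hq]

lemma prodSum (m L : ℕ) (g : Fin m → Fin L → ℂ) :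
    ∑ t : Fin m → Fin L, ∏ k, g k (t k) = ∏ k, ∑ a : Fin L, g k a := by
  rw [Finset.prod_univ_sum, Fintype.piFinset_univ]

/-- If the generating matrix of `f` is para-unitary, each row of `f` is a
complementary array set. -/
theorem stmt5 (q p m N : ℕ) [NeZero p] (hq : 0 < q)
    (f : Fin N → Fin N → (Fin m → ZMod p) → ZMod q) (c : ℝ)
    (hPU : ∀ z : Fin m → ℂ, (∀ k, z k ≠ 0) →
      genMat q p m N f z * genMatDag q p m N f (fun k => (z k)⁻¹) =
        (c : ℂ) • (1 : Matrix (Fin N) (Fin N) ℂ)) :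
    ∀ i : Fin N, ∀ τ : Fin m → ℤ, τ ≠ 0 →
      ∑ j : Fin N, pcorr q p m (f i j) (f i j) τ = 0 := by
  intro i τ hτ
  have hp : 0 < p := Nat.pos_of_ne_zero (NeZero.ne p)
  by_cases hbig : ∃ k, (p : ℤ) ≤ |τ k|
  · obtain ⟨k0, hk0⟩ := hbig
    apply Finset.sum_eq_zero
    intro j _
    rw [pcorr]
    apply Finset.sum_eq_zero; intro y _
    apply Finset.sum_eq_zero; intro y' _
    rw [if_neg]
    intro h
    have h0 := h k0
    have h1 : (y k0).val < p := ZMod.val_lt _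
    have h2 : (y' k0).val < p := ZMod.val_lt _
    rcases le_abs.mp hk0 with h3 | h3 <;> omega
  · push_neg at hbig
    set L : ℕ := 2 * p with hLdef
    have hL : 0 < L := by omega
    set ζ : ℂ := Complex.exp (2 * Real.pi * Complex.I / L) with hζ
    have hzne : ζ ≠ 0 := Complex.exp_ne_zero _
    have hchar : ∀ d : ℤ, ∑ a : Fin L, ζ ^ ((a : ℤ) * d)
        = if (L : ℤ) ∣ d then (L : ℂ) else 0 := fun d => by
      rw [hζ]; exact charSum L hL d
    -- step 1 : diagonal entry identity
    have h1 : ∀ t : Fin m → Fin L,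
        ∑ j, genMat q p m N f (fun k => ζ ^ (t k : ℕ)) i j *
          genMatDag q p m N f (fun k => (ζ ^ (t k : ℕ))⁻¹) j i = (c : ℂ) := by
      intro t
      have h := hPU (fun k => ζ ^ (t k : ℕ)) (fun k => pow_ne_zero _ hzne)
      have h2 := congrFun (congrFun h i) i
      simpa [Matrix.mul_apply, Matrix.smul_apply, Matrix.one_apply] using h2
    -- step 2 : expand the product of the two entries
    have hterm : ∀ (t : Fin m → Fin L) (j : Fin N),
        genMat q p m N f (fun k => ζ ^ (t k : ℕ)) i j *
          genMatDag q p m N f (fun k => (ζ ^ (t k : ℕ))⁻¹) j i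
        = ∑ y : Fin m → ZMod p, ∑ y' : Fin m → ZMod p,
            ec q (f i j y - f i j y') *
              ∏ k, ζ ^ ((t k : ℤ) * (((y k).val : ℤ) - ((y' k).val : ℤ))) := by
      intro t j
      rw [genMat, genMatDag, Finset.sum_mul_sum]
      apply Finset.sum_congr rfl; intro y _
      apply Finset.sum_congr rfl; intro y' _
      rw [sub_eq_add_neg, ec_add q hq, mul_mul_mul_comm]
      congr 1
      rw [← Finset.prod_mul_distrib]
      apply Finset.prod_congr rfl; intro k _
      rw [← pow_mul, inv_pow, ← pow_mul, ← zpow_natCast ζ ((t k : ℕ) * (y k).val),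
        ← zpow_natCast ζ ((t k : ℕ) * (y' k).val), ← zpow_neg, ← zpow_add₀ hzne]
      congr 1
      push_cast
      ring
    -- step 3 : character sum over shifts
    have hDsum : ∀ (D : Fin m → ℤ), (∀ k, |D k| < 2 * p) →
        ∑ t : Fin m → Fin L, ∏ k, ζ ^ ((t k : ℤ) * D k)
          = if ∀ k, D k = 0 then ((L : ℂ)) ^ m else 0 := by
      intro D hD
      rw [prodSum m L (fun k a => ζ ^ ((a : ℤ) * D k))]
      by_cases h : ∀ k, D k = 0
      · simp only [hchar, h, if_pos]
        simp [h, Finset.prod_const]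
      · push_neg at h
        obtain ⟨k1, hk1⟩ := h
        rw [if_neg (by push_neg; exact ⟨k1, hk1⟩)]
        apply Finset.prod_eq_zero (Finset.mem_univ k1)
        rw [hchar, if_neg]
        intro hdvd
        have h4 : (L : ℤ) ≤ |D k1| :=
          Int.le_of_dvd (abs_pos.mpr hk1) ((dvd_abs _ _).mpr hdvd)
        have h5 := hD k1
        have : ((2 * p : ℕ) : ℤ) ≤ |D k1| := by exact_mod_cast h4
        push_cast at this
        omega
    -- the key evaluation for fixed y y'
    have key : ∀ (y y' : Fin m → ZMod p),
        (∑ t : Fin m → Fin L, ∏ k,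
            ζ ^ ((t k : ℤ) * ((((y k).val : ℤ) - ((y' k).val : ℤ)) - τ k)))
          = if ∀ k, ((y k).val : ℤ) = ((y' k).val : ℤ) + τ k
            then ((L : ℂ)) ^ m else 0 := by
      intro y y'
      rw [hDsum _ ?_]
      · refine if_congr ⟨fun h k => by have := h k; omega,
          fun h k => by have := h k; omega⟩ rfl rfl
      · intro k
        have h1 : (y k).val < p := ZMod.val_lt _
        have h2 : (y' k).val < p := ZMod.val_lt _
        have h3 := hbig k
        rcases abs_lt.mp h3 with ⟨ha, hb⟩
        rw [abs_lt]
        constructor <;> omega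
    -- T = 0
    obtain ⟨k0, hk0⟩ := Function.ne_iff.mp hτ
    have hT0 : (∑ t : Fin m → Fin L, (∏ k, ζ ^ ((t k : ℤ) * (-τ k))) * (c : ℂ)) = 0 := by
      rw [← Finset.sum_mul, prodSum m L (fun k a => ζ ^ ((a : ℤ) * (-τ k)))]
      have : (∏ k, ∑ a : Fin L, ζ ^ ((a : ℤ) * (-τ k))) = 0 := by
        apply Finset.prod_eq_zero (Finset.mem_univ k0)
        rw [hchar, if_neg]
        intro hdvd
        rw [Int.dvd_neg] at hdvd
        have h4 : (L : ℤ) ≤ |τ k0| :=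
          Int.le_of_dvd (abs_pos.mpr hk0) ((dvd_abs _ _).mpr hdvd)
        have h5 := hbig k0
        have h6 : ((2 * p : ℕ) : ℤ) ≤ |τ k0| := by exact_mod_cast h4
        push_cast at h6
        omega
      rw [this, zero_mul]
    -- T = L^m * sum of correlations
    have hT : (∑ t : Fin m → Fin L, (∏ k, ζ ^ ((t k : ℤ) * (-τ k))) * (c : ℂ))
        = ((L : ℂ)) ^ m * ∑ j, pcorr q p m (f i j) (f i j) τ := by
      calc ∑ t : Fin m → Fin L, (∏ k, ζ ^ ((t k : ℤ) * (-τ k))) * (c : ℂ)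
          = ∑ t : Fin m → Fin L, ∑ j, ∑ y : Fin m → ZMod p, ∑ y' : Fin m → ZMod p,
              (∏ k, ζ ^ ((t k : ℤ) * (-τ k))) *
                (ec q (f i j y - f i j y') *
                  ∏ k, ζ ^ ((t k : ℤ) * (((y k).val : ℤ) - ((y' k).val : ℤ)))) := by
            apply Finset.sum_congr rfl; intro t _
            rw [← h1 t, Finset.mul_sum]
            apply Finset.sum_congr rfl; intro j _
            rw [hterm t j, Finset.mul_sum]
            apply Finset.sum_congr rfl; intro y _
            rw [Finset.mul_sum]
        _ = ∑ j, ∑ y : Fin m → ZMod p, ∑ y' : Fin m → ZMod p,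
              ec q (f i j y - f i j y') *
                ∑ t : Fin m → Fin L, ∏ k,
                  ζ ^ ((t k : ℤ) * ((((y k).val : ℤ) - ((y' k).val : ℤ)) - τ k)) := by
            rw [Finset.sum_comm]
            apply Finset.sum_congr rfl; intro j _
            rw [Finset.sum_comm]
            apply Finset.sum_congr rfl; intro y _
            rw [Finset.sum_comm]
            apply Finset.sum_congr rfl; intro y' _
            rw [Finset.mul_sum]
            apply Finset.sum_congr rfl; intro t _
            rw [mul_comm, mul_assoc]
            congr 1
            rw [← Finset.prod_mul_distrib]
            apply Finset.prod_congr rfl; intro k _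
            rw [← zpow_add₀ hzne]
            congr 1
            ring
        _ = ∑ j, ∑ y : Fin m → ZMod p, ∑ y' : Fin m → ZMod p,
              ec q (f i j y - f i j y') *
                (if ∀ k, ((y k).val : ℤ) = ((y' k).val : ℤ) + τ k
                  then ((L : ℂ)) ^ m else 0) := by
            apply Finset.sum_congr rfl; intro j _
            apply Finset.sum_congr rfl; intro y _
            apply Finset.sum_congr rfl; intro y' _
            rw [key y y']
        _ = ((L : ℂ)) ^ m * ∑ j, pcorr q p m (f i j) (f i j) τ := by
            simp only [pcorr, Finset.mul_sum, mul_ite, mul_zero]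
            apply Finset.sum_congr rfl; intro j _
            apply Finset.sum_congr rfl; intro y _
            apply Finset.sum_congr rfl; intro y' _
            split_ifs
            · ring
            · rfl
    have hfin : ((L : ℂ)) ^ m * ∑ j, pcorr q p m (f i j) (f i j) τ = 0 := by
      rw [← hT]; exact hT0
    have hLne : ((L : ℂ)) ^ m ≠ 0 := by
      apply pow_ne_zero
      exact_mod_cast hL.ne'
    exact (mul_eq_zero.mp hfin).resolve_left hLne
end
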